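/- Fix an integer κ ≥ 3, let (X_t)_{t≥0} be a κ-color FCA trajectory on ℤ, and suppose no edge flips at any time t ≥ t_0, where t_0 ≥ 0. Then for all x, y ∈ ℤ and all t ≥ t_0: ∫_x^y dX_{t+1} − ∫_x^y dX_t = 1{x is excited at time t} − 1{y is excited at time t}. Moreover, the tournament expansion satisfies rk_{t+1}(x) − rk_t(x) = 1{x is excited at time t} for every x ∈ ℤ and t ≥ t_0. -/

import Mathlib

/-!
Every site either keeps its colour (when excited) or advances by one, so across the edge
`(x, x+1)` the colour difference changes by `δ = 1{x excited} - 1{x+1 excited} ∈ {-1, 0, 1}`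
modulo `κ`. The 1-form is a representative of that difference in `[-κ/2, κ/2]`; two such
representatives whose difference is congruent to `δ` either differ by exactly `δ` or sit at
opposite ends of the range, and for `κ ≥ 3` the latter is a flip. Without flips the 1-form thus
changes edgewise by `δ`, its path integrals telescope, and `rk_t(0) = ne_t(0)` grows by the
excitation indicator of `0`.
-/

noncomputable section

namespace FCA

/-- The blinking color `b(κ) = ⌊(κ-1)/2⌋`. -/
def blink (κ : ℕ) : ℕ := (κ - 1) / 2

/-- One step of the κ-color firefly cellular automaton on ℤ. -/
def step (κ : ℕ) (X : ℤ → ZMod κ) : ℤ → ZMod κ := fun x =>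
  if (X x).val > blink κ ∧ ((X (x - 1)).val = blink κ ∨ (X (x + 1)).val = blink κ)
  then X x else X x + 1

/-- The FCA trajectory started from `X0`. -/
def traj (κ : ℕ) (X0 : ℤ → ZMod κ) : ℕ → ℤ → ZMod κ
  | 0 => X0
  | t + 1 => step κ (traj κ X0 t)

/-- Site `x` is excited at time `t`: `X_{t+1}(x) = X_t(x)`. -/
def excited (κ : ℕ) (X0 : ℤ → ZMod κ) (t : ℕ) (x : ℤ) : Prop :=
  traj κ X0 (t + 1) x = traj κ X0 t x

/-- The number of excitations of site `x` before time `t`. -/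
def ne' (κ : ℕ) (X0 : ℤ → ZMod κ) (t : ℕ) (x : ℤ) : ℕ :=
  ((Finset.range t).filter fun s => traj κ X0 (s + 1) x = traj κ X0 s x).card

/-- The associated 1-form on the oriented edge `(x, x+1)`. -/
def dform (κ : ℕ) (X : ℤ → ZMod κ) (x : ℤ) : ℤ :=
  let d : ℕ := (X (x + 1) - X x).val
  if 2 * d < κ then (d : ℤ)
  else if κ < 2 * d then (d : ℤ) - (κ : ℤ)
  else if (X x).val ≤ blink κ then ((κ / 2 : ℕ) : ℤ) else -((κ / 2 : ℕ) : ℤ)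

/-- The edge `(x, x+1)` flips at time `t`. -/
def flips (κ : ℕ) (X0 : ℤ → ZMod κ) (t : ℕ) (x : ℤ) : Prop :=
  (0 < dform κ (traj κ X0 t) x ∧ dform κ (traj κ X0 (t + 1)) x < 0) ∨
  (dform κ (traj κ X0 t) x < 0 ∧ 0 < dform κ (traj κ X0 (t + 1)) x)

/-- Path integral of an edge function: `∫_x^y f = Σ_{i=x}^{y-1} f(i)` for `x ≤ y`,
and `∫_y^x f = -∫_x^y f`. -/
def pathInt (f : ℤ → ℤ) (x y : ℤ) : ℤ :=
  if x ≤ y then ∑ i ∈ Finset.Ico x y, f i else -∑ i ∈ Finset.Ico y x, f i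

/-- The tournament expansion: `rk_t(0) = ne_t(0)` and `rk_t(x) = rk_t(0) - ∫_0^x dX_t`. -/
def rk (κ : ℕ) (X0 : ℤ → ZMod κ) (t : ℕ) (x : ℤ) : ℤ :=
  (ne' κ X0 t 0 : ℤ) - pathInt (dform κ (traj κ X0 t)) 0 x

/-- `M_t(r)`: the maximum rank at time `t` among sites `x` with `|x| ≤ r`. -/
def maxRk (κ : ℕ) (X0 : ℤ → ZMod κ) (t : ℕ) (r : ℝ) : ℤ :=
  sSup (rk κ X0 t '' {x : ℤ | |(x : ℝ)| ≤ r})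

end FCA

open FCA
open scoped Classical

namespace FCA

lemma pathInt_add_one_right (f : ℤ → ℤ) (x y : ℤ) :
    pathInt f x (y + 1) = pathInt f x y + f y := by
  rcases le_or_gt x y with hxy | hyx
  · rw [pathInt, if_pos (by omega), pathInt, if_pos hxy,
      ← Finset.insert_Ico_right_eq_Ico_add_one hxy, Finset.sum_insert (by simp), add_comm]
  · rcases eq_or_lt_of_le (Int.add_one_le_of_lt hyx) with rfl | hyx'
    · simp [pathInt, Finset.Ico_add_one_right_eq_Icc]
    · rw [pathInt, if_neg (by omega), pathInt, if_neg (by omega),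
        ← Finset.insert_Ico_add_one_left_eq_Ico hyx, Finset.sum_insert (by simp)]
      ring

lemma pathInt_sub_pathInt_of_sub_eq {f g e : ℤ → ℤ} (h : ∀ i, f i - g i = e i - e (i + 1))
    (x y : ℤ) : pathInt f x y - pathInt g x y = e x - e y := by
  induction y using Int.inductionOn' (b := x) with
  | zero => simp [pathInt]
  | succ k _ ih =>
    rw [pathInt_add_one_right, pathInt_add_one_right]
    linarith [h k]
  | pred k _ ih =>
    have hf := pathInt_add_one_right f x (k - 1)
    have hg := pathInt_add_one_right g x (k - 1)
    have hk := h (k - 1)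
    rw [sub_add_cancel] at hf hg hk
    linarith

section dform

variable {κ : ℕ}

lemma intCast_dform [NeZero κ] (X : ℤ → ZMod κ) (x : ℤ) :
    ((dform κ X x : ℤ) : ZMod κ) = X (x + 1) - X x := by
  obtain ⟨j, hj⟩ : ∃ j : ℤ, dform κ X x = (X (x + 1) - X x).val - κ * j := by
    dsimp only [dform]
    split_ifs
    · exact ⟨0, by ring⟩
    · exact ⟨1, by ring⟩
    · exact ⟨0, by omega⟩
    · exact ⟨1, by omega⟩
  rw [hj]
  push_cast
  simp

lemma abs_two_mul_dform_le [NeZero κ] (X : ℤ → ZMod κ) (x : ℤ) : |2 * dform κ X x| ≤ κ := by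
  have hd := ZMod.val_lt (X (x + 1) - X x)
  rw [abs_le]
  dsimp only [dform]
  split_ifs <;> omega

lemma dform_eq_add_of_not_flip (hκ : 3 ≤ κ) {X Y : ℤ → ZMod κ} {x δ : ℤ} (hδ : |δ| ≤ 1)
    (hY : Y (x + 1) - Y x = X (x + 1) - X x + δ)
    (hflip : ¬ ((0 < dform κ X x ∧ dform κ Y x < 0) ∨ (dform κ X x < 0 ∧ 0 < dform κ Y x))) :
    dform κ Y x = dform κ X x + δ := by
  have : NeZero κ := ⟨by omega⟩
  obtain ⟨k, hk⟩ : (κ : ℤ) ∣ dform κ Y x - (dform κ X x + δ) := by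
    rw [← ZMod.intCast_zmod_eq_zero_iff_dvd]
    push_cast
    rw [intCast_dform, intCast_dform, hY]
    ring
  have hXbound := abs_le.mp (abs_two_mul_dform_le X x)
  have hYbound := abs_le.mp (abs_two_mul_dform_le Y x)
  rw [abs_le] at hδ
  rcases lt_trichotomy k 0 with hk0 | rfl | hk0
  · have : (κ : ℤ) * k ≤ -κ := by nlinarith
    omega
  · omega
  · have : (κ : ℤ) ≤ κ * k := by nlinarith
    omega

end dform

section trajectory

variable {κ : ℕ} (X0 : ℤ → ZMod κ) (t : ℕ)

lemma traj_succ_of_not_excited {z : ℤ} (h : ¬ excited κ X0 t z) :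
    traj κ X0 (t + 1) z = traj κ X0 t z + 1 := by
  simp only [excited, traj, step] at h ⊢
  split_ifs at h ⊢ <;> simp_all

lemma traj_succ_eq_add_one_sub (z : ℤ) :
    traj κ X0 (t + 1) z =
      traj κ X0 t z + 1 - ((if excited κ X0 t z then 1 else 0 : ℤ) : ZMod κ) := by
  by_cases h : excited κ X0 t z
  · rw [if_pos h, Int.cast_one, add_sub_cancel_right]
    exact h
  · rw [if_neg h, Int.cast_zero, sub_zero, traj_succ_of_not_excited X0 t h]

lemma ne'_succ (x : ℤ) :
    (ne' κ X0 (t + 1) x : ℤ) = ne' κ X0 t x + if excited κ X0 t x then 1 else 0 := by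
  rw [ne', ne', Finset.range_add_one, Finset.filter_insert]
  by_cases h : excited κ X0 t x
  · rw [if_pos h]
    unfold excited at h
    rw [if_pos h, Finset.card_insert_of_notMem (by simp), Nat.cast_succ]
  · rw [if_neg h, add_zero]
    unfold excited at h
    rw [if_neg h]

lemma dform_traj_succ (hκ : 3 ≤ κ) {x : ℤ} (h : ¬ flips κ X0 t x) :
    dform κ (traj κ X0 (t + 1)) x = dform κ (traj κ X0 t) x +
      ((if excited κ X0 t x then 1 else 0) - (if excited κ X0 t (x + 1) then 1 else 0)) :=
  dform_eq_add_of_not_flip hκ (by split_ifs <;> norm_num)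
    (by rw [traj_succ_eq_add_one_sub, traj_succ_eq_add_one_sub]; push_cast; ring) h

lemma pathInt_dform_traj_succ_sub (hκ : 3 ≤ κ) (h : ∀ x, ¬ flips κ X0 t x) (x y : ℤ) :
    pathInt (dform κ (traj κ X0 (t + 1))) x y - pathInt (dform κ (traj κ X0 t)) x y =
      (if excited κ X0 t x then 1 else 0) - (if excited κ X0 t y then 1 else 0) := by
  refine pathInt_sub_pathInt_of_sub_eq (e := fun z => if excited κ X0 t z then 1 else 0)
    (fun i => ?_) x y
  rw [dform_traj_succ X0 t hκ (h i)]
  ring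

end trajectory

end FCA

/-- If no edge flips at any time `t ≥ t₀`, then for all sites `x, y` and
`t ≥ t₀` the change of the path integral `∫_x^y dX_t` equals the indicator that `x` is
excited minus the indicator that `y` is excited; consequently
`rk_{t+1}(x) - rk_t(x) = 1{x excited at time t}`. -/
theorem fca_rank_increment (κ : ℕ) (hκ : 3 ≤ κ) (X0 : ℤ → ZMod κ) (t₀ : ℕ)
    (hnoflip : ∀ t : ℕ, t₀ ≤ t → ∀ x : ℤ, ¬ flips κ X0 t x) :
    (∀ (x y : ℤ) (t : ℕ), t₀ ≤ t →
      pathInt (dform κ (traj κ X0 (t + 1))) x y - pathInt (dform κ (traj κ X0 t)) x y =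
        (if excited κ X0 t x then 1 else 0) - (if excited κ X0 t y then 1 else 0)) ∧
    (∀ (x : ℤ) (t : ℕ), t₀ ≤ t →
      rk κ X0 (t + 1) x - rk κ X0 t x = if excited κ X0 t x then 1 else 0) := by
  refine ⟨fun x y t ht => pathInt_dform_traj_succ_sub X0 t hκ (hnoflip t ht) x y,
    fun x t ht => ?_⟩
  have hpath := pathInt_dform_traj_succ_sub X0 t hκ (hnoflip t ht) 0 x
  rw [rk, rk, ne'_succ]
  linarith
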